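/- Let Γ = {A ∈ M₃(R) : A₁₂, A₁₃ ∈ m} be the hereditary overorder of the Gelfand order, acting on the column space R³, and set P̃_⋆ = R³ and P̃_⋄ = m⊕R⊕R (a Γ-submodule of R³). Then every nonzero Γ-submodule of R³ equals tⁿ·P̃_⋆ or tⁿ·P̃_⋄ for some n ∈ ℕ. In particular the Γ-submodules of P̃_⋆ are totally ordered by inclusion (P̃_⋆ is uniserial, and likewise P̃_⋄), and every nonzero Γ-submodule of R³ is isomorphic to P̃_⋆ or P̃_⋄, hence projective. -/

import Mathlib

set_option maxHeartbeats 1600000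
set_option synthInstance.maxHeartbeats 400000

noncomputable section

variable (k : Type) [Field k]

/-- The maximal ideal `m = (t)` of `R = k⟦t⟧`. -/
def mIdeal : Ideal (PowerSeries k) :=
  Ideal.span {PowerSeries.X}

lemma X_mem_mIdeal : (PowerSeries.X : PowerSeries k) ∈ mIdeal k :=
  Ideal.subset_span rfl

/-- The Gelfand order `Λ ⊆ M₃(k⟦t⟧)`: all matrices `A` with
`A₁₂, A₁₃, A₂₃, A₃₂ ∈ m`. -/
def gelfandOrder : Subalgebra k (Matrix (Fin 3) (Fin 3) (PowerSeries k)) where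
  carrier := {A | A 0 1 ∈ mIdeal k ∧ A 0 2 ∈ mIdeal k ∧ A 1 2 ∈ mIdeal k ∧ A 2 1 ∈ mIdeal k}
  zero_mem' := ⟨zero_mem _, zero_mem _, zero_mem _, zero_mem _⟩
  one_mem' := by
    refine ⟨?_, ?_, ?_, ?_⟩ <;>
    · rw [Matrix.one_apply_ne (by decide)]
      exact zero_mem _
  add_mem' := by
    rintro a b ⟨ha1, ha2, ha3, ha4⟩ ⟨hb1, hb2, hb3, hb4⟩
    exact ⟨add_mem ha1 hb1, add_mem ha2 hb2, add_mem ha3 hb3, add_mem ha4 hb4⟩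
  mul_mem' := by
    rintro a b ⟨ha1, ha2, ha3, ha4⟩ ⟨hb1, hb2, hb3, hb4⟩
    refine ⟨?_, ?_, ?_, ?_⟩ <;>
      simp only [Set.mem_setOf_eq, Matrix.mul_apply, Fin.sum_univ_three]
    · exact add_mem (add_mem (Ideal.mul_mem_left _ _ hb1) (Ideal.mul_mem_right _ _ ha1))
        (Ideal.mul_mem_left _ _ hb4)
    · exact add_mem (add_mem (Ideal.mul_mem_left _ _ hb2) (Ideal.mul_mem_left _ _ hb3))
        (Ideal.mul_mem_right _ _ ha2)
    · exact add_mem (add_mem (Ideal.mul_mem_left _ _ hb2) (Ideal.mul_mem_left _ _ hb3))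
        (Ideal.mul_mem_right _ _ ha3)
    · exact add_mem (add_mem (Ideal.mul_mem_left _ _ hb1) (Ideal.mul_mem_right _ _ ha4))
        (Ideal.mul_mem_left _ _ hb4)
  algebraMap_mem' := by
    intro r
    refine ⟨?_, ?_, ?_, ?_⟩ <;>
    · rw [Matrix.algebraMap_matrix_apply, if_neg (by decide)]
      exact zero_mem _

/-- The column space `R³` is a module over the matrix ring `M₃(k⟦t⟧)` via
matrix-vector multiplication; by restriction of scalars it becomes a left module over
every subalgebra of `M₃(k⟦t⟧)`, in particular over the Gelfand order. -/
instance : Module (Matrix (Fin 3) (Fin 3) (PowerSeries k)) (Fin 3 → PowerSeries k) where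
  smul A v := A.mulVec v
  one_smul v := Matrix.one_mulVec v
  mul_smul A B v := (Matrix.mulVec_mulVec v A B).symm
  smul_zero A := Matrix.mulVec_zero A
  smul_add A u v := Matrix.mulVec_add A u v
  add_smul A B v := Matrix.add_mulVec A B v
  zero_smul v := Matrix.zero_mulVec v

instance : IsScalarTower k (Matrix (Fin 3) (Fin 3) (PowerSeries k)) (Fin 3 → PowerSeries k) :=
  ⟨fun c M v => Matrix.smul_mulVec c M v⟩

instance : SMulCommClass (Matrix (Fin 3) (Fin 3) (PowerSeries k)) k (Fin 3 → PowerSeries k) :=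
  ⟨fun M c v => Matrix.mulVec_smul M c v⟩

instance : SMulCommClass k (Matrix (Fin 3) (Fin 3) (PowerSeries k)) (Fin 3 → PowerSeries k) :=
  SMulCommClass.symm _ _ _

instance (S : Subalgebra k (Matrix (Fin 3) (Fin 3) (PowerSeries k))) :
    IsScalarTower k (↥S) (Fin 3 → PowerSeries k) :=
  ⟨fun c A v => by
    show ((c • A : ↥S) : Matrix (Fin 3) (Fin 3) (PowerSeries k)) • v
        = c • ((A : Matrix (Fin 3) (Fin 3) (PowerSeries k)) • v)
    rw [Subalgebra.coe_smul]
    exact smul_assoc c (A : Matrix (Fin 3) (Fin 3) (PowerSeries k)) v⟩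

instance (S : Subalgebra k (Matrix (Fin 3) (Fin 3) (PowerSeries k))) :
    SMulCommClass (↥S) k (Fin 3 → PowerSeries k) :=
  ⟨fun A c v => by
    show (A : Matrix (Fin 3) (Fin 3) (PowerSeries k)) • (c • v)
        = c • ((A : Matrix (Fin 3) (Fin 3) (PowerSeries k)) • v)
    exact smul_comm _ c v⟩

instance (S : Subalgebra k (Matrix (Fin 3) (Fin 3) (PowerSeries k))) :
    SMulCommClass k (↥S) (Fin 3 → PowerSeries k) :=
  SMulCommClass.symm _ _ _

lemma subalg_smul_apply (S : Subalgebra k (Matrix (Fin 3) (Fin 3) (PowerSeries k)))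
    (A : ↥S) (v : Fin 3 → PowerSeries k) (i : Fin 3) :
    (A • v) i = (A : Matrix (Fin 3) (Fin 3) (PowerSeries k)) i 0 * v 0
      + (A : Matrix (Fin 3) (Fin 3) (PowerSeries k)) i 1 * v 1
      + (A : Matrix (Fin 3) (Fin 3) (PowerSeries k)) i 2 * v 2 := by
  show ((A : Matrix (Fin 3) (Fin 3) (PowerSeries k)).mulVec v) i = _
  simp [Matrix.mulVec, dotProduct, Fin.sum_univ_three]

lemma subalg_smul_comm_X (S : Subalgebra k (Matrix (Fin 3) (Fin 3) (PowerSeries k)))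
    (A : ↥S) (x : PowerSeries k) (v : Fin 3 → PowerSeries k) :
    A • (x • v) = x • (A • v) := by
  show (A : Matrix (Fin 3) (Fin 3) (PowerSeries k)) • (x • v)
      = x • ((A : Matrix (Fin 3) (Fin 3) (PowerSeries k)) • v)
  exact Matrix.mulVec_smul _ x v

/-- The hereditary overorder `Γ` of the Gelfand order: all matrices `A ∈ M₃(k⟦t⟧)`
with `A₁₂, A₁₃ ∈ m`. -/
def heredOrder : Subalgebra k (Matrix (Fin 3) (Fin 3) (PowerSeries k)) where
  carrier := {A | A 0 1 ∈ mIdeal k ∧ A 0 2 ∈ mIdeal k}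
  zero_mem' := ⟨zero_mem _, zero_mem _⟩
  one_mem' := by
    refine ⟨?_, ?_⟩ <;>
    · rw [Matrix.one_apply_ne (by decide)]
      exact zero_mem _
  add_mem' := by
    rintro a b ⟨ha1, ha2⟩ ⟨hb1, hb2⟩
    exact ⟨add_mem ha1 hb1, add_mem ha2 hb2⟩
  mul_mem' := by
    rintro a b ⟨ha1, ha2⟩ ⟨hb1, hb2⟩
    refine ⟨?_, ?_⟩ <;>
      simp only [Set.mem_setOf_eq, Matrix.mul_apply, Fin.sum_univ_three]
    · exact add_mem (add_mem (Ideal.mul_mem_left _ _ hb1) (Ideal.mul_mem_right _ _ ha1))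
        (Ideal.mul_mem_right _ _ ha2)
    · exact add_mem (add_mem (Ideal.mul_mem_left _ _ hb2) (Ideal.mul_mem_right _ _ ha1))
        (Ideal.mul_mem_right _ _ ha2)
  algebraMap_mem' := by
    intro r
    refine ⟨?_, ?_⟩ <;>
    · rw [Matrix.algebraMap_matrix_apply, if_neg (by decide)]
      exact zero_mem _

/-- `P̃_⋆ = R³`, the full column space, and `P̃_⋄ = m ⊕ R ⊕ R`, a `Γ`-submodule of `R³`. -/
def Pdiamond : Submodule (↥(heredOrder k)) (Fin 3 → PowerSeries k) where
  carrier := {v | v 0 ∈ mIdeal k}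
  zero_mem' := show (0 : PowerSeries k) ∈ mIdeal k from zero_mem _
  add_mem' := fun {a b} ha hb => by
    have ha' : a 0 ∈ mIdeal k := ha
    have hb' : b 0 ∈ mIdeal k := hb
    exact add_mem ha' hb'
  smul_mem' := by
    rintro ⟨A, hA1, hA2⟩ v h0
    rw [Set.mem_setOf_eq, subalg_smul_apply]
    exact add_mem (add_mem (Ideal.mul_mem_left _ _ h0) (Ideal.mul_mem_right _ _ hA1))
      (Ideal.mul_mem_right _ _ hA2)

/-- Multiplication by `t` as a `Γ`-linear endomorphism of `R³`. -/
def multX : Module.End (↥(heredOrder k)) (Fin 3 → PowerSeries k) where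
  toFun v := (PowerSeries.X : PowerSeries k) • v
  map_add' u v := smul_add _ u v
  map_smul' A v := by
    simp only [RingHom.id_apply]
    exact (subalg_smul_comm_X k _ A _ v).symm

/-!
The `Γ`-submodules `tⁿ·P̃_⋆ ⊋ tⁿ·P̃_⋄ ⊋ tⁿ⁺¹·P̃_⋆ ⊋ ⋯` form a chain `L₀ ⊋ L₁ ⊋ L₂ ⊋ ⋯` described by
divisibility of coordinates: `v ∈ L_j` iff `t^⌈j/2⌉ ∣ v₀` and `t^⌊j/2⌋ ∣ v₁, v₂`. Since `⋂ L_j = 0`,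
a nonzero submodule `N` lies in a last `L_j` and contains some `v ∈ L_j \ L_{j+1}`. Such a `v` has a
coordinate `vᵢ` that is a unit times the smallest power of `t` allowed in `L_j`, and the matrix
units of `Γ` in column `i` then move `v` onto every element of `L_j`; hence `N = L_j`.
Both `P̃_⋆` and `P̃_⋄` are columns of `Γ`, hence direct summands of it.
-/

open PowerSeries Matrix

local notation "R³" => Fin 3 → PowerSeries k

def latticeExp (j : ℕ) (i : Fin 3) : ℕ := if i = 0 then (j + 1) / 2 else j / 2

lemma latticeExp_mono (i : Fin 3) : Monotone (latticeExp · i) := fun a b hab => by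
  dsimp only [latticeExp]
  split_ifs <;> omega

lemma latticeExp_succ_le (j : ℕ) (i : Fin 3) : latticeExp (j + 1) i ≤ latticeExp j i + 1 := by
  unfold latticeExp
  split_ifs <;> omega

lemma latticeExp_add_two (j : ℕ) (i : Fin 3) : latticeExp (j + 2) i = latticeExp j i + 1 := by
  unfold latticeExp
  split_ifs <;> omega

lemma latticeExp_le_succ (j : ℕ) (p q : Fin 3) : latticeExp j p ≤ latticeExp j q + 1 := by
  unfold latticeExp
  split_ifs <;> omega

lemma latticeExp_le {j : ℕ} {p q : Fin 3} (h : p ≠ 0 ∨ q = 0) :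
    latticeExp j p ≤ latticeExp j q := by
  unfold latticeExp
  rcases h with h | rfl
  all_goals split_ifs <;> omega

lemma latticeExp_le_of_lt_succ {j : ℕ} {i : Fin 3} (h : latticeExp j i < latticeExp (j + 1) i)
    (l : Fin 3) : latticeExp j i ≤ latticeExp j l := by
  unfold latticeExp at *
  split_ifs at * <;> omega

lemma latticeExp_lt_zero_of_lt_succ {j : ℕ} {i : Fin 3}
    (h : latticeExp j i < latticeExp (j + 1) i) (hi : i ≠ 0) : latticeExp j i < latticeExp j 0 := by
  unfold latticeExp at *
  split_ifs at * <;> omega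

section

variable {k}
variable (S : Subalgebra k (Matrix (Fin 3) (Fin 3) (PowerSeries k)))

lemma subalgebra_smul_eq_mulVec (A : S) (v : R³) : A • v = (A : Matrix _ _ _) *ᵥ v := rfl

lemma single_smul {l i : Fin 3} {c : PowerSeries k} (h : single l i c ∈ S) (v : R³) :
    (⟨single l i c, h⟩ : S) • v = Pi.single l (c * v i) := by
  rw [subalgebra_smul_eq_mulVec, single_mulVec]
  rfl

lemma mem_of_forall_eq_mul_apply (N : Submodule S R³) {v z : R³} (hv : v ∈ N) (i : Fin 3)
    (hz : ∀ l, ∃ c, single l i c ∈ S ∧ z l = c * v i) : z ∈ N := by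
  rw [← Finset.univ_sum_single z]
  refine Submodule.sum_mem _ fun l _ => ?_
  obtain ⟨c, hc, hzl⟩ := hz l
  rw [hzl, ← single_smul S hc]
  exact N.smul_mem _ hv

theorem projective_of_vecMulVec_mem (P : Submodule S R³) (q : Fin 3)
    (hmem : ∀ v ∈ P, vecMulVec v (Pi.single q 1) ∈ S) (hcol : ∀ A ∈ S, A.col q ∈ P) :
    Module.Projective S P := by
  let toColumn : P →ₗ[S] S :=
    { toFun v := ⟨vecMulVec v (Pi.single q 1), hmem v v.2⟩
      map_add' v w := Subtype.ext (add_vecMulVec _ _ _)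
      map_smul' A v := by
        apply Subtype.ext
        simp only [RingHom.id_apply, Submodule.coe_smul, smul_eq_mul, Subalgebra.coe_mul,
          subalgebra_smul_eq_mulVec, mul_vecMulVec] }
  let ofColumn : S →ₗ[S] P := (LinearMap.toSpanSingleton S R³ (Pi.single q 1)).codRestrict P
    fun A => by simpa [subalgebra_smul_eq_mulVec] using hcol A A.2
  refine Module.Projective.of_split toColumn ofColumn (LinearMap.ext fun v => Subtype.ext ?_)
  ext p
  simp [toColumn, ofColumn, subalgebra_smul_eq_mulVec, vecMulVec_apply]

lemma single_mem_heredOrder {l i : Fin 3} {c : PowerSeries k} (h : l = 0 → i ≠ 0 → c ∈ mIdeal k) :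
    single l i c ∈ heredOrder k := by
  constructor <;>
  · rw [single_apply]
    split_ifs with hli
    · exact h hli.1 (hli.2 ▸ by decide)
    · exact zero_mem _

lemma heredOrder_apply_zero_mem {A : Matrix (Fin 3) (Fin 3) (PowerSeries k)}
    (hA : A ∈ heredOrder k) {q : Fin 3} (hq : q ≠ 0) : A 0 q ∈ mIdeal k := by
  fin_cases q
  exacts [absurd rfl hq, hA.1, hA.2]

lemma mem_mIdeal_iff_X_dvd {f : PowerSeries k} : f ∈ mIdeal k ↔ X ∣ f :=
  Ideal.mem_span_singleton

lemma dvd_X_pow_of_not_X_pow_succ_dvd {f : PowerSeries k} {m : ℕ} (h : X ^ m ∣ f)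
    (h' : ¬ X ^ (m + 1) ∣ f) : f ∣ X ^ m := by
  obtain ⟨g, rfl⟩ := h
  have hg : IsUnit g := by
    rw [isUnit_iff_constantCoeff, isUnit_iff_ne_zero, ne_eq, ← X_dvd_iff]
    exact fun hX => h' (by rw [pow_succ]; exact mul_dvd_mul_left _ hX)
  exact hg.mul_right_dvd.mpr dvd_rfl

end

def latticeChain (j : ℕ) : Submodule (heredOrder k) R³ where
  carrier := {v | ∀ i, X ^ latticeExp j i ∣ v i}
  zero_mem' _ := dvd_zero _
  add_mem' hv hw i := dvd_add (hv i) (hw i)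
  smul_mem' A v hv p := by
    simp only [subalgebra_smul_eq_mulVec, mulVec, dotProduct]
    refine Finset.dvd_sum fun q _ => ?_
    by_cases hpq : p = 0 ∧ q ≠ 0
    · obtain ⟨rfl, hq⟩ := hpq
      obtain ⟨a, ha⟩ := mem_mIdeal_iff_X_dvd.mp (heredOrder_apply_zero_mem A.2 hq)
      refine (pow_dvd_pow X (latticeExp_le_succ j 0 q)).trans ?_
      rw [ha, pow_succ']
      exact mul_dvd_mul (dvd_mul_right X a) (hv q)
    · exact (pow_dvd_pow X (latticeExp_le (by tauto))).trans (dvd_mul_of_dvd_right (hv q) _)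

section

variable {k}

lemma mem_latticeChain {j : ℕ} {v : R³} : v ∈ latticeChain k j ↔ ∀ i, X ^ latticeExp j i ∣ v i :=
  Iff.rfl

lemma latticeChain_antitone : Antitone (latticeChain k) :=
  fun _ _ hij _ hv i => (pow_dvd_pow X (latticeExp_mono i hij)).trans (hv i)

lemma latticeChain_zero : latticeChain k 0 = ⊤ :=
  eq_top_iff.mpr fun v _ i => by simp [latticeExp]

lemma latticeChain_one : latticeChain k 1 = Pdiamond k := by
  ext v
  refine ⟨fun hv => mem_mIdeal_iff_X_dvd.mpr (by simpa [latticeExp] using hv 0), fun hv i => ?_⟩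
  fin_cases i
  · simpa [latticeExp] using mem_mIdeal_iff_X_dvd.mp hv
  all_goals simp [latticeExp]

lemma latticeChain_add_two (j : ℕ) :
    latticeChain k (j + 2) = (latticeChain k j).map (multX k) := by
  ext v
  simp only [Submodule.mem_map, mem_latticeChain, latticeExp_add_two, pow_succ']
  constructor
  · intro hv
    choose w hw using fun i => dvd_of_mul_right_dvd (hv i)
    refine ⟨w, fun i => ?_, funext fun i => (hw i).symm⟩
    exact (mul_dvd_mul_iff_left X_ne_zero).mp (hw i ▸ hv i)
  · rintro ⟨w, hw, rfl⟩ i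
    exact mul_dvd_mul_left X (hw i)

lemma latticeChain_two_mul_add (n j : ℕ) :
    latticeChain k (2 * n + j) = (latticeChain k j).map (multX k ^ n) := by
  induction n with
  | zero => simp [Module.End.one_eq_id]
  | succ n ih =>
    rw [show 2 * (n + 1) + j = 2 * n + j + 2 by ring, latticeChain_add_two, ih, pow_succ',
      Module.End.mul_eq_comp, Submodule.map_comp]

lemma exists_notMem_latticeChain {v : R³} (hv : v ≠ 0) : ∃ j, v ∉ latticeChain k j := by
  obtain ⟨i, hi⟩ := Function.ne_iff.mp hv
  obtain ⟨m, hm⟩ := FiniteMultiplicity.def.mp (.of_not_isUnit X_prime.not_isUnit hi)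
  refine ⟨2 * (m + 1), fun h => hm ((pow_dvd_pow X ?_).trans (h i))⟩
  unfold latticeExp
  split_ifs <;> omega

theorem latticeChain_le_of_mem_of_notMem {N : Submodule (heredOrder k) R³} {j : ℕ} {v : R³}
    (hvN : v ∈ N) (hv : v ∈ latticeChain k j) (hv' : v ∉ latticeChain k (j + 1)) :
    latticeChain k j ≤ N := by
  obtain ⟨i, hi⟩ : ∃ i, ¬ X ^ latticeExp (j + 1) i ∣ v i := by simpa [mem_latticeChain] using hv'
  have hjump : latticeExp j i < latticeExp (j + 1) i :=
    lt_of_not_ge fun hle => hi ((pow_dvd_pow X hle).trans (hv i))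
  obtain ⟨d, hd⟩ : v i ∣ X ^ latticeExp j i := dvd_X_pow_of_not_X_pow_succ_dvd (hv i)
    fun h => hi ((pow_dvd_pow X (latticeExp_succ_le j i)).trans h)
  intro z hz
  refine mem_of_forall_eq_mul_apply _ N hvN i fun l => ?_
  obtain ⟨w, hzw, hw⟩ : ∃ w, z l = X ^ latticeExp j i * w ∧ (l = 0 → i ≠ 0 → w ∈ mIdeal k) := by
    by_cases hli : l = 0 ∧ i ≠ 0
    · obtain ⟨rfl, hi0⟩ := hli
      obtain ⟨w, hw⟩ := (pow_dvd_pow X (latticeExp_lt_zero_of_lt_succ hjump hi0)).trans (hz 0)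
      exact ⟨X * w, by rw [hw, pow_succ, mul_assoc],
        fun _ _ => mem_mIdeal_iff_X_dvd.mpr (dvd_mul_right X w)⟩
    · obtain ⟨w, hw⟩ := (pow_dvd_pow X (latticeExp_le_of_lt_succ hjump l)).trans (hz l)
      exact ⟨w, hw, fun hl hi0 => absurd ⟨hl, hi0⟩ hli⟩
  refine ⟨w * d, single_mem_heredOrder fun hl hi0 => Ideal.mul_mem_right d _ (hw hl hi0), ?_⟩
  rw [hzw, hd]
  ring

theorem exists_eq_latticeChain {N : Submodule (heredOrder k) R³} (hN : N ≠ ⊥) :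
    ∃ j, N = latticeChain k j := by
  classical
  have hex : ∃ j, ¬ N ≤ latticeChain k j := by
    obtain ⟨v, hvN, hv0⟩ := Submodule.exists_mem_ne_zero_of_ne_bot hN
    obtain ⟨j, hj⟩ := exists_notMem_latticeChain hv0
    exact ⟨j, fun h => hj (h hvN)⟩
  obtain ⟨j, hj⟩ : ∃ j, Nat.find hex = j + 1 :=
    Nat.exists_eq_add_one.mpr (Nat.pos_of_ne_zero fun h =>
      Nat.find_spec hex (h ▸ latticeChain_zero (k := k) ▸ le_top))
  have hle : N ≤ latticeChain k j := not_not.mp (Nat.find_min hex (by omega))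
  obtain ⟨v, hvN, hv⟩ := SetLike.not_le_iff_exists.mp (hj ▸ Nat.find_spec hex)
  exact ⟨j, le_antisymm hle (latticeChain_le_of_mem_of_notMem hvN (hle hvN) hv)⟩

lemma multX_pow_injective (n : ℕ) : Function.Injective (multX k ^ n) := by
  rw [Module.End.coe_pow]
  exact Function.Injective.iterate (smul_right_injective R³ X_ne_zero) n

instance : Module.Projective (heredOrder k) (⊤ : Submodule (heredOrder k) R³) :=
  projective_of_vecMulVec_mem _ ⊤ 0 (fun v _ => by constructor <;> simp [vecMulVec_apply])
    fun _ _ => trivial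

instance : Module.Projective (heredOrder k) (Pdiamond k) :=
  projective_of_vecMulVec_mem _ _ 1 (fun v hv =>
    ⟨by simp only [vecMulVec_apply, Pi.single_eq_same, mul_one]; exact hv,
      by simp [vecMulVec_apply]⟩)
    fun _ hA => hA.1

end

/-- Every nonzero `Γ`-submodule of `R³` equals `tⁿ·P̃_⋆` or
`tⁿ·P̃_⋄` for some `n ∈ ℕ`.  In particular the `Γ`-submodules of `R³` are totally
ordered by inclusion (`P̃_⋆`, and likewise `P̃_⋄`, is uniserial), and every nonzero
`Γ`-submodule of `R³` is isomorphic to `P̃_⋆` or `P̃_⋄`, hence projective. -/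
theorem heredOrder_uniserial :
    (∀ N : Submodule (↥(heredOrder k)) (Fin 3 → PowerSeries k), N ≠ ⊥ →
      ∃ n : ℕ,
        N = Submodule.map ((multX k) ^ n)
            (⊤ : Submodule (↥(heredOrder k)) (Fin 3 → PowerSeries k)) ∨
        N = Submodule.map ((multX k) ^ n) (Pdiamond k)) ∧
    (∀ N₁ N₂ : Submodule (↥(heredOrder k)) (Fin 3 → PowerSeries k), N₁ ≤ N₂ ∨ N₂ ≤ N₁) ∧
    (∀ N : Submodule (↥(heredOrder k)) (Fin 3 → PowerSeries k), N ≠ ⊥ →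
      (Nonempty ((↥N) ≃ₗ[↥(heredOrder k)] (Fin 3 → PowerSeries k)) ∨
        Nonempty ((↥N) ≃ₗ[↥(heredOrder k)] ↥(Pdiamond k))) ∧
      Module.Projective (↥(heredOrder k)) (↥N)) := by
  have classification : ∀ N : Submodule (heredOrder k) R³, N ≠ ⊥ → ∃ n : ℕ,
      N = (⊤ : Submodule (heredOrder k) R³).map (multX k ^ n) ∨
        N = (Pdiamond k).map (multX k ^ n) := by
    intro N hN
    obtain ⟨j, rfl⟩ := exists_eq_latticeChain hN
    obtain ⟨n, rfl | rfl⟩ := Nat.even_or_odd' j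
    · exact ⟨n, .inl (by rw [← latticeChain_zero, ← latticeChain_two_mul_add, add_zero])⟩
    · exact ⟨n, .inr (by rw [← latticeChain_one, ← latticeChain_two_mul_add])⟩
  refine ⟨classification, fun N₁ N₂ => ?_, fun N hN => ?_⟩
  · rcases eq_or_ne N₁ ⊥ with rfl | h₁
    · exact .inl bot_le
    rcases eq_or_ne N₂ ⊥ with rfl | h₂
    · exact .inr bot_le
    obtain ⟨j₁, rfl⟩ := exists_eq_latticeChain h₁
    obtain ⟨j₂, rfl⟩ := exists_eq_latticeChain h₂
    exact (le_total j₂ j₁).imp (latticeChain_antitone ·) (latticeChain_antitone ·)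
  · obtain ⟨n, rfl | rfl⟩ := classification N hN
    · let e := Submodule.equivMapOfInjective (multX k ^ n) (multX_pow_injective n) ⊤
      exact ⟨.inl ⟨e.symm.trans Submodule.topEquiv⟩, .of_equiv e⟩
    · let e := Submodule.equivMapOfInjective (multX k ^ n) (multX_pow_injective n) (Pdiamond k)
      exact ⟨.inr ⟨e.symm⟩, .of_equiv e⟩
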